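/- arXiv:0912.3533 — 4 statements merged into one kernel-verified Lean document; each statement's English description precedes it below -/
import Mathlib

section
/- Let (g₁₁, ρ, k_a, k_b) be a spherically symmetric initial data set on B_{r̄} satisfying the dominant energy condition μ ≥ |J(n)|, and let 0 < r₁ < r₂ ≤ r̄. Suppose the annular region between S_{r₁} and S_{r₂} is untrapped with both families of light rays expanding: θ₊ > 0 and θ₋ > 0 on the open interval (r₁, r₂), and at each endpoint θ₊ ≥ 0, θ₋ ≥ 0 with θ₊ + θ₋ > 0 (so an endpoint sphere may be a future or a past apparent horizon, but not both). Then the Misner–Sharp energy is monotone nondecreasing across the region: E_{r₂} ≥ E_{r₁}. -/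
open Real Set

/-- Derivative with respect to radial arclength: `D f = (1/√g₁₁) df/dr`. -/
noncomputable def D (g11 f : ℝ → ℝ) (r : ℝ) : ℝ := deriv f r / Real.sqrt (g11 r)

/-- Scalar curvature of the metric `g = g₁₁ dr² + ρ² dχ²`:
`R = −4 D²ρ/ρ + 2(1 − (Dρ)²)/ρ²`. -/
noncomputable def scalarCurv (g11 ρ : ℝ → ℝ) (r : ℝ) : ℝ :=
  -4 * D g11 (D g11 ρ) r / ρ r + 2 * (1 - (D g11 ρ r) ^ 2) / (ρ r) ^ 2

/-- Energy density `μ = (1/16π)(R + 4 k_a k_b + 2 k_b²)`. -/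
noncomputable def energyDensity (g11 ρ ka kb : ℝ → ℝ) (r : ℝ) : ℝ :=
  (1 / (16 * π)) * (scalarCurv g11 ρ r + 4 * ka r * kb r + 2 * (kb r) ^ 2)

/-- Radial momentum density `J(n) = (1/4π)((Dρ/ρ)(k_a − k_b) − D k_b)`. -/
noncomputable def momentumDensity (g11 ρ ka kb : ℝ → ℝ) (r : ℝ) : ℝ :=
  (1 / (4 * π)) * ((D g11 ρ r / ρ r) * (ka r - kb r) - D g11 kb r)

/-- Future null expansion `θ₊ = 2Dρ/ρ + 2k_b`. -/
noncomputable def θp (g11 ρ kb : ℝ → ℝ) (r : ℝ) : ℝ := 2 * D g11 ρ r / ρ r + 2 * kb r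

/-- Past null expansion `θ₋ = 2Dρ/ρ − 2k_b`. -/
noncomputable def θm (g11 ρ kb : ℝ → ℝ) (r : ℝ) : ℝ := 2 * D g11 ρ r / ρ r - 2 * kb r

/-- Geodesic radius `Rad(B_r) = ∫₀^r √g₁₁`. -/
noncomputable def Rad (g11 : ℝ → ℝ) (r : ℝ) : ℝ := ∫ t in (0:ℝ)..r, Real.sqrt (g11 t)

/-- Volume `Vol(B_r) = 4π ∫₀^r √g₁₁ ρ²`. -/
noncomputable def Vol (g11 ρ : ℝ → ℝ) (r : ℝ) : ℝ :=
  4 * π * ∫ t in (0:ℝ)..r, Real.sqrt (g11 t) * (ρ t) ^ 2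

/-- Misner–Sharp energy `E_r = (ρ/2)(1 − (ρ²/4) θ₊ θ₋)`. -/
noncomputable def MSenergy (g11 ρ kb : ℝ → ℝ) (r : ℝ) : ℝ :=
  ρ r / 2 * (1 - (ρ r) ^ 2 / 4 * (θp g11 ρ kb r * θm g11 ρ kb r))

/-- **Theorem 3 (expanding untrapped region).** For spherically symmetric initial data
satisfying the dominant energy condition, if `θ₊ > 0` and `θ₋ > 0` on the annulus
`(r₁, r₂)` and at each endpoint `θ₊ ≥ 0`, `θ₋ ≥ 0`, `θ₊ + θ₋ > 0`, then the
Misner–Sharp energy is monotone nondecreasing: `E_{r₂} ≥ E_{r₁}`. -/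
theorem MisnerSharp_monotone_nondecreasing
    (g11 ρ ka kb : ℝ → ℝ) (rbar r₁ r₂ : ℝ)
    (hg11 : ContDiff ℝ (⊤ : ℕ∞) g11) (hρ : ContDiff ℝ (⊤ : ℕ∞) ρ)
    (hka : ContDiff ℝ (⊤ : ℕ∞) ka) (hkb : ContDiff ℝ (⊤ : ℕ∞) kb)
    (hg11pos : ∀ t ∈ Icc (0:ℝ) rbar, 0 < g11 t)
    (hρ0 : ρ 0 = 0) (hρ'0 : deriv ρ 0 = 1) (hg110 : g11 0 = 1)
    (hρpos : ∀ t ∈ Ioc (0:ℝ) rbar, 0 < ρ t)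
    (hDEC : ∀ t ∈ Icc (0:ℝ) rbar,
      |momentumDensity g11 ρ ka kb t| ≤ energyDensity g11 ρ ka kb t)
    (hr₁ : 0 < r₁) (hr₁₂ : r₁ < r₂) (hr₂ : r₂ ≤ rbar)
    (huntrapped : ∀ t ∈ Ioo r₁ r₂, 0 < θp g11 ρ kb t ∧ 0 < θm g11 ρ kb t)
    (hend : ∀ t, t = r₁ ∨ t = r₂ →
      0 ≤ θp g11 ρ kb t ∧ 0 ≤ θm g11 ρ kb t ∧ 0 < θp g11 ρ kb t + θm g11 ρ kb t) :
    MSenergy g11 ρ kb r₁ ≤ MSenergy g11 ρ kb r₂ := by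
  classical
  -- basic smoothness facts
  have h1top : (1 : WithTop ℕ∞) ≤ (⊤ : ℕ∞) := by norm_num
  have hρd : Differentiable ℝ ρ := hρ.differentiable (by norm_num)
  have hgd : Differentiable ℝ g11 := hg11.differentiable (by norm_num)
  have hkd : Differentiable ℝ kb := hkb.differentiable (by norm_num)
  have hρi : ContDiff ℝ ((⊤ : ℕ∞) : WithTop ℕ∞) ρ := hρ.of_le (by simp)
  have hρ'd : Differentiable ℝ (deriv ρ) :=
    (contDiff_infty_iff_deriv.mp hρi).2.differentiable (by norm_num)
  -- positivity on our interval
  have hgx : ∀ x ∈ Icc r₁ r₂, 0 < g11 x := fun x hx =>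
    hg11pos x ⟨le_trans hr₁.le hx.1, le_trans hx.2 hr₂⟩
  have hρx : ∀ x ∈ Icc r₁ r₂, 0 < ρ x := fun x hx =>
    hρpos x ⟨lt_of_lt_of_le hr₁ hx.1, le_trans hx.2 hr₂⟩
  -- the sqrt-free energy function
  set F : ℝ → ℝ := fun r =>
    ρ r / 2 - ρ r * (deriv ρ r) ^ 2 / (2 * g11 r) + ρ r ^ 3 * kb r ^ 2 / 2 with hFdef
  -- MSenergy = F on the interval
  have hEq : ∀ x ∈ Icc r₁ r₂, MSenergy g11 ρ kb x = F x := by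
    intro x hx
    have hg := hgx x hx
    have hρp := hρx x hx
    have hs2 : Real.sqrt (g11 x) ^ 2 = g11 x := Real.sq_sqrt hg.le
    have hsne : Real.sqrt (g11 x) ≠ 0 := (Real.sqrt_pos.mpr hg).ne'
    obtain ⟨s, hspos, hseq⟩ : ∃ s, 0 < s ∧ Real.sqrt (g11 x) = s :=
      ⟨_, Real.sqrt_pos.mpr hg, rfl⟩
    have hg2 : g11 x = s ^ 2 := by rw [← hseq]; exact hs2.symm
    simp only [MSenergy, θp, θm, D, hFdef]
    rw [hseq, hg2]
    field_simp
    ring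
  -- derivative of F is nonnegative on the open interval
  have hHasDeriv : ∀ x, 0 < g11 x → HasDerivAt F
      (deriv ρ x / 2 -
        ((deriv ρ x * deriv ρ x ^ 2 +
            ρ x * ((2 : ℕ) * deriv ρ x ^ 1 * deriv (deriv ρ) x)) * (2 * g11 x) -
          ρ x * deriv ρ x ^ 2 * (2 * deriv g11 x)) / (2 * g11 x) ^ 2 +
        ((3 : ℕ) * ρ x ^ 2 * deriv ρ x * kb x ^ 2 +
          ρ x ^ 3 * ((2 : ℕ) * kb x ^ 1 * deriv kb x)) / 2) x := by
    intro x hg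
    have hρ' : HasDerivAt ρ (deriv ρ x) x := (hρd x).hasDerivAt
    have hρ'' : HasDerivAt (deriv ρ) (deriv (deriv ρ) x) x := (hρ'd x).hasDerivAt
    have hg' : HasDerivAt g11 (deriv g11 x) x := (hgd x).hasDerivAt
    have hkb' : HasDerivAt kb (deriv kb x) x := (hkd x).hasDerivAt
    have h2g : HasDerivAt (fun r => 2 * g11 r) (2 * deriv g11 x) x := hg'.const_mul 2
    have hnum : HasDerivAt (fun r => ρ r * (deriv ρ r) ^ 2)
        (deriv ρ x * deriv ρ x ^ 2 + ρ x * ((2 : ℕ) * deriv ρ x ^ 1 * deriv (deriv ρ) x)) x :=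
      hρ'.mul (hρ''.pow 2)
    have hf2 := hnum.div h2g (by positivity)
    have hf3 := ((hρ'.pow 3).mul (hkb'.pow 2)).div_const 2
    have hf1 := hρ'.div_const 2
    exact (hf1.sub hf2).add hf3
  have hderiv_nonneg : ∀ x ∈ Ioo r₁ r₂, 0 ≤ deriv F x := by
    intro x hx
    have hxI : x ∈ Icc r₁ r₂ := Ioo_subset_Icc_self hx
    have hg := hgx x hxI
    have hρp := hρx x hxI
    have hs2 : Real.sqrt (g11 x) ^ 2 = g11 x := Real.sq_sqrt hg.le
    have hspos : 0 < Real.sqrt (g11 x) := Real.sqrt_pos.mpr hg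
    have hsne : Real.sqrt (g11 x) ≠ 0 := hspos.ne'
    rw [(hHasDeriv x hg).deriv]
    -- second derivative of the arclength-derivative of ρ
    have hDρ : deriv (D g11 ρ) x =
        (deriv (deriv ρ) x * Real.sqrt (g11 x) -
          deriv ρ x * (deriv g11 x / (2 * Real.sqrt (g11 x)))) / Real.sqrt (g11 x) ^ 2 := by
      have hρ'' : HasDerivAt (deriv ρ) (deriv (deriv ρ) x) x := (hρ'd x).hasDerivAt
      have hg' : HasDerivAt g11 (deriv g11 x) x := (hgd x).hasDerivAt
      have hs : HasDerivAt (fun r => Real.sqrt (g11 r))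
          (deriv g11 x / (2 * Real.sqrt (g11 x))) x := hg'.sqrt hg.ne'
      exact (hρ''.div hs hsne).deriv
    -- DEC at x
    have hdec := hDEC x ⟨le_trans hr₁.le hxI.1, le_trans hxI.2 hr₂⟩
    obtain ⟨hJle, hJge⟩ := abs_le.mp hdec
    have hθ := huntrapped x hx
    -- the key identity
    have key : deriv ρ x / 2 -
        ((deriv ρ x * deriv ρ x ^ 2 +
            ρ x * ((2 : ℕ) * deriv ρ x ^ 1 * deriv (deriv ρ) x)) * (2 * g11 x) -
          ρ x * deriv ρ x ^ 2 * (2 * deriv g11 x)) / (2 * g11 x) ^ 2 +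
        ((3 : ℕ) * ρ x ^ 2 * deriv ρ x * kb x ^ 2 +
          ρ x ^ 3 * ((2 : ℕ) * kb x ^ 1 * deriv kb x)) / 2 =
        Real.sqrt (g11 x) * (π * ρ x ^ 3 *
          (θp g11 ρ kb x * (energyDensity g11 ρ ka kb x - momentumDensity g11 ρ ka kb x) +
           θm g11 ρ kb x * (energyDensity g11 ρ ka kb x + momentumDensity g11 ρ ka kb x))) := by
      obtain ⟨s, hs0, hseq⟩ : ∃ s, 0 < s ∧ Real.sqrt (g11 x) = s := ⟨_, hspos, rfl⟩
      have hg2 : g11 x = s ^ 2 := by rw [← hseq]; exact hs2.symm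
      have hπ : (π : ℝ) ≠ 0 := Real.pi_ne_zero
      simp only [θp, θm, energyDensity, momentumDensity, scalarCurv, D, hDρ]
      rw [hseq, hg2]
      field_simp
      ring
    rw [key]
    have h1 : 0 ≤ energyDensity g11 ρ ka kb x - momentumDensity g11 ρ ka kb x := by linarith
    have h2 : 0 ≤ energyDensity g11 ρ ka kb x + momentumDensity g11 ρ ka kb x := by linarith
    have h3 : 0 ≤ θp g11 ρ kb x * (energyDensity g11 ρ ka kb x - momentumDensity g11 ρ ka kb x) +
        θm g11 ρ kb x * (energyDensity g11 ρ ka kb x + momentumDensity g11 ρ ka kb x) :=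
      add_nonneg (mul_nonneg hθ.1.le h1) (mul_nonneg hθ.2.le h2)
    have h4 : 0 ≤ π * ρ x ^ 3 := mul_nonneg Real.pi_pos.le (by positivity)
    exact mul_nonneg hspos.le (mul_nonneg h4 h3)
  -- monotonicity of F on [r₁, r₂]
  have hFdiff : ∀ x ∈ Icc r₁ r₂, DifferentiableAt ℝ F x := fun x hx =>
    (hHasDeriv x (hgx x hx)).differentiableAt
  have hmono : MonotoneOn F (Icc r₁ r₂) := by
    apply monotoneOn_of_deriv_nonneg (convex_Icc r₁ r₂)
    · exact fun x hx => (hFdiff x hx).continuousAt.continuousWithinAt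
    · intro x hx
      rw [interior_Icc] at hx
      exact (hFdiff x (Ioo_subset_Icc_self hx)).differentiableWithinAt
    · intro x hx
      rw [interior_Icc] at hx
      exact hderiv_nonneg x hx
  have h1 : r₁ ∈ Icc r₁ r₂ := ⟨le_refl r₁, hr₁₂.le⟩
  have h2 : r₂ ∈ Icc r₁ r₂ := ⟨hr₁₂.le, le_refl r₂⟩
  calc MSenergy g11 ρ kb r₁ = F r₁ := hEq r₁ h1
    _ ≤ F r₂ := hmono h1 h2 hr₁₂.le
    _ = MSenergy g11 ρ kb r₂ := (hEq r₂ h2).symm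
end

section
/- Let (g₁₁, ρ, k_a, k_b) be a spherically symmetric initial data set on B_{r̄} satisfying the dominant energy condition μ ≥ |J(n)|, and let 0 < r₁ < r₂ ≤ r̄. Suppose the annular region between S_{r₁} and S_{r₂} is untrapped with both families of light rays contracting: θ₊ < 0 and θ₋ < 0 on the open interval (r₁, r₂), and at each endpoint θ₊ ≤ 0, θ₋ ≤ 0 with θ₊ + θ₋ < 0. Then the Misner–Sharp energy is monotone nonincreasing across the region: E_{r₂} ≤ E_{r₁}. -/
open Real Set

/-- **Theorem 3 (contracting untrapped region).** For spherically symmetric initial data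
satisfying the dominant energy condition, if `θ₊ < 0` and `θ₋ < 0` on the annulus
`(r₁, r₂)` and at each endpoint `θ₊ ≤ 0`, `θ₋ ≤ 0`, `θ₊ + θ₋ < 0`, then the
Misner–Sharp energy is monotone nonincreasing: `E_{r₂} ≤ E_{r₁}`. -/
theorem MisnerSharp_monotone_nonincreasing
    (g11 ρ ka kb : ℝ → ℝ) (rbar r₁ r₂ : ℝ)
    (hg11 : ContDiff ℝ (⊤ : ℕ∞) g11) (hρ : ContDiff ℝ (⊤ : ℕ∞) ρ)
    (hka : ContDiff ℝ (⊤ : ℕ∞) ka) (hkb : ContDiff ℝ (⊤ : ℕ∞) kb)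
    (hg11pos : ∀ t ∈ Icc (0:ℝ) rbar, 0 < g11 t)
    (hρ0 : ρ 0 = 0) (hρ'0 : deriv ρ 0 = 1) (hg110 : g11 0 = 1)
    (hρpos : ∀ t ∈ Ioc (0:ℝ) rbar, 0 < ρ t)
    (hDEC : ∀ t ∈ Icc (0:ℝ) rbar,
      |momentumDensity g11 ρ ka kb t| ≤ energyDensity g11 ρ ka kb t)
    (hr₁ : 0 < r₁) (hr₁₂ : r₁ < r₂) (hr₂ : r₂ ≤ rbar)
    (huntrapped : ∀ t ∈ Ioo r₁ r₂, θp g11 ρ kb t < 0 ∧ θm g11 ρ kb t < 0)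
    (hend : ∀ t, t = r₁ ∨ t = r₂ →
      θp g11 ρ kb t ≤ 0 ∧ θm g11 ρ kb t ≤ 0 ∧ θp g11 ρ kb t + θm g11 ρ kb t < 0) :
    MSenergy g11 ρ kb r₂ ≤ MSenergy g11 ρ kb r₁ := by
  have hπ : (0:ℝ) < π := Real.pi_pos
  -- the open set where everything is positive
  set U : Set ℝ := {t | 0 < g11 t ∧ 0 < ρ t} with hUdef
  have hUopen : IsOpen U := by
    have h1 : IsOpen {t : ℝ | 0 < g11 t} := isOpen_lt continuous_const hg11.continuous
    have h2 : IsOpen {t : ℝ | 0 < ρ t} := isOpen_lt continuous_const hρ.continuous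
    simpa [hUdef, Set.setOf_and] using h1.inter h2
  have hsub : Icc r₁ r₂ ⊆ U := by
    intro t ht
    refine ⟨hg11pos t ⟨le_of_lt (lt_of_lt_of_le hr₁ ht.1), le_trans ht.2 hr₂⟩,
      hρpos t ⟨lt_of_lt_of_le hr₁ ht.1, le_trans ht.2 hr₂⟩⟩
  -- the smooth substitute for the Misner-Sharp energy
  set G : ℝ → ℝ := fun t => ρ t / 2 * (1 - (deriv ρ t) ^ 2 / g11 t + (ρ t) ^ 2 * (kb t) ^ 2)
    with hGdef
  -- MSenergy = G on U
  have hEq : EqOn (MSenergy g11 ρ kb) G U := by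
    intro t ht
    have hb : 0 < g11 t := ht.1
    have ha : 0 < ρ t := ht.2
    obtain ⟨s, hspos, hseq⟩ : ∃ s, 0 < s ∧ g11 t = s ^ 2 :=
      ⟨Real.sqrt (g11 t), Real.sqrt_pos.mpr hb, (Real.sq_sqrt hb.le).symm⟩
    simp only [MSenergy, θp, θm, D, hGdef]
    rw [hseq, Real.sqrt_sq hspos.le]
    field_simp
    ring
  -- derivatives of the basic functions
  have hρ' : Differentiable ℝ (deriv ρ) :=
    ((contDiff_infty_iff_deriv.mp (hρ.of_le (by simp))).2).differentiable (by norm_num)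
  -- the explicit derivative of G at points of U
  have hG : ∀ x ∈ U, HasDerivAt G
      (deriv ρ x / 2 * (1 - (deriv ρ x) ^ 2 / g11 x + (ρ x) ^ 2 * (kb x) ^ 2)
        + ρ x / 2 * (-((2 * deriv ρ x * deriv (deriv ρ) x) * g11 x
              - (deriv ρ x) ^ 2 * deriv g11 x) / (g11 x) ^ 2
            + (2 * ρ x * deriv ρ x * (kb x) ^ 2 + (ρ x) ^ 2 * (2 * kb x * deriv kb x)))) x := by
    intro x hx
    have hb : 0 < g11 x := hx.1
    have h1 : HasDerivAt ρ (deriv ρ x) x := ((hρ.differentiable (by simp)) x).hasDerivAt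
    have h2 : HasDerivAt (deriv ρ) (deriv (deriv ρ) x) x :=
      (hρ' x).hasDerivAt
    have h3 : HasDerivAt g11 (deriv g11 x) x := ((hg11.differentiable (by simp)) x).hasDerivAt
    have h4 : HasDerivAt kb (deriv kb x) x := ((hkb.differentiable (by simp)) x).hasDerivAt
    have hInner : HasDerivAt
        (fun t => 1 - (deriv ρ t) ^ 2 / g11 t + (ρ t) ^ 2 * (kb t) ^ 2)
        (-((2 * deriv ρ x * deriv (deriv ρ) x) * g11 x
              - (deriv ρ x) ^ 2 * deriv g11 x) / (g11 x) ^ 2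
            + (2 * ρ x * deriv ρ x * (kb x) ^ 2 + (ρ x) ^ 2 * (2 * kb x * deriv kb x))) x := by
      have hA : HasDerivAt (fun t => (deriv ρ t) ^ 2 / g11 t)
          (((2 * deriv ρ x * deriv (deriv ρ) x) * g11 x
            - (deriv ρ x) ^ 2 * deriv g11 x) / (g11 x) ^ 2) x := by
        have := (h2.pow 2).div h3 hb.ne'
        refine this.congr_deriv ?_
        push_cast [Pi.pow_apply]
        ring
      have hB : HasDerivAt (fun t => (ρ t) ^ 2 * (kb t) ^ 2)
          (2 * ρ x * deriv ρ x * (kb x) ^ 2 + (ρ x) ^ 2 * (2 * kb x * deriv kb x)) x := by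
        have := (h1.pow 2).mul (h4.pow 2)
        refine this.congr_deriv ?_
        push_cast [Pi.pow_apply]
        ring
      have := ((hasDerivAt_const x (1:ℝ)).sub hA).add hB
      refine this.congr_deriv ?_
      ring
    have := (h1.div_const 2).mul hInner
    exact this
  -- the derivative of G is nonpositive on the open annulus
  have hderiv_nonpos : ∀ x ∈ Ioo r₁ r₂, deriv G x ≤ 0 := by
    intro x hx
    have hxU : x ∈ U := hsub (Ioo_subset_Icc_self hx)
    have hb : 0 < g11 x := hxU.1
    have ha : 0 < ρ x := hxU.2
    have hsne : Real.sqrt (g11 x) ≠ 0 := by positivity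
    have hspos : 0 < Real.sqrt (g11 x) := Real.sqrt_pos.mpr hb
    have hs2 : Real.sqrt (g11 x) ^ 2 = g11 x := Real.sq_sqrt hb.le
    -- derivative of D g11 ρ
    have hsq : HasDerivAt (fun t => Real.sqrt (g11 t))
        (1 / (2 * Real.sqrt (g11 x)) * deriv g11 x) x := by
      have h3 : HasDerivAt g11 (deriv g11 x) x := ((hg11.differentiable (by simp)) x).hasDerivAt
      exact (Real.hasDerivAt_sqrt hb.ne').comp x h3
    have h2 : HasDerivAt (deriv ρ) (deriv (deriv ρ) x) x :=
      (hρ' x).hasDerivAt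
    have hfun : D g11 ρ = fun t => deriv ρ t / Real.sqrt (g11 t) := rfl
    have hD2 : deriv (D g11 ρ) x =
        (deriv (deriv ρ) x * Real.sqrt (g11 x)
          - deriv ρ x * (1 / (2 * Real.sqrt (g11 x)) * deriv g11 x)) / Real.sqrt (g11 x) ^ 2 := by
      rw [hfun]
      exact (h2.div hsq hsne).deriv
    rw [(hG x hxU).deriv]
    -- abbreviations
    set μ := energyDensity g11 ρ ka kb x with hμdef
    set J := momentumDensity g11 ρ ka kb x with hJdef
    set tp := θp g11 ρ kb x with htpdef
    set tm := θm g11 ρ kb x with htmdef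
    have hDECx : |J| ≤ μ := hDEC x ⟨(lt_trans hr₁ hx.1).le, le_trans hx.2.le hr₂⟩
    have hJ1 : -μ ≤ J := (abs_le.mp hDECx).1
    have hJ2 : J ≤ μ := (abs_le.mp hDECx).2
    have htp : tp < 0 := (huntrapped x hx).1
    have htm : tm < 0 := (huntrapped x hx).2
    -- the key factorization
    have hfact : deriv ρ x / 2 * (1 - (deriv ρ x) ^ 2 / g11 x + (ρ x) ^ 2 * (kb x) ^ 2)
        + ρ x / 2 * (-((2 * deriv ρ x * deriv (deriv ρ) x) * g11 x
              - (deriv ρ x) ^ 2 * deriv g11 x) / (g11 x) ^ 2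
            + (2 * ρ x * deriv ρ x * (kb x) ^ 2 + (ρ x) ^ 2 * (2 * kb x * deriv kb x)))
        = Real.sqrt (g11 x) * π * (ρ x) ^ 3 * ((μ - J) * tp + (μ + J) * tm) := by
      rw [hμdef, hJdef, htpdef, htmdef]
      simp only [energyDensity, momentumDensity, scalarCurv, θp, θm, D]
      rw [hD2]
      obtain ⟨s, hspos2, hseq⟩ : ∃ s, 0 < s ∧ g11 x = s ^ 2 :=
        ⟨Real.sqrt (g11 x), hspos, (Real.sq_sqrt hb.le).symm⟩
      rw [hseq, Real.sqrt_sq hspos2.le]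
      field_simp
      ring
    rw [hfact]
    have h1 : (μ - J) * tp ≤ 0 := mul_nonpos_of_nonneg_of_nonpos (by linarith) htp.le
    have h2 : (μ + J) * tm ≤ 0 := mul_nonpos_of_nonneg_of_nonpos (by linarith) htm.le
    have hpos : 0 ≤ Real.sqrt (g11 x) * π * (ρ x) ^ 3 := by positivity
    exact mul_nonpos_of_nonneg_of_nonpos hpos (by linarith)
  -- conclude by monotonicity
  have hanti : AntitoneOn (MSenergy g11 ρ kb) (Icc r₁ r₂) := by
    have hGcont : ContinuousOn G (Icc r₁ r₂) := fun x hx =>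
      (hG x (hsub hx)).differentiableAt.continuousAt.continuousWithinAt
    have hcont : ContinuousOn (MSenergy g11 ρ kb) (Icc r₁ r₂) :=
      hGcont.congr (hEq.mono hsub)
    have hdiff : DifferentiableOn ℝ (MSenergy g11 ρ kb) (interior (Icc r₁ r₂)) := by
      rw [interior_Icc]
      intro x hx
      have hxU : x ∈ U := hsub (Ioo_subset_Icc_self hx)
      have hev : MSenergy g11 ρ kb =ᶠ[nhds x] G :=
        Filter.eventuallyEq_of_mem (hUopen.mem_nhds hxU) hEq
      exact (hev.differentiableAt_iff.mpr (hG x hxU).differentiableAt).differentiableWithinAt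
    refine antitoneOn_of_deriv_nonpos (convex_Icc r₁ r₂) hcont hdiff ?_
    intro x hx
    rw [interior_Icc] at hx
    have hxU : x ∈ U := hsub (Ioo_subset_Icc_self hx)
    have hev : MSenergy g11 ρ kb =ᶠ[nhds x] G :=
      Filter.eventuallyEq_of_mem (hUopen.mem_nhds hxU) hEq
    rw [hev.deriv_eq]
    exact hderiv_nonpos x hx
  exact hanti (left_mem_Icc.mpr hr₁₂.le) (right_mem_Icc.mpr hr₁₂.le) hr₁₂.le
end

section
/- Let (g₁₁, ρ, k_a, k_b) be a spherically symmetric initial data set on B_{r̄} satisfying the dominant energy condition μ ≥ |J(n)|, and let 0 < r ≤ r̄. If the sphere S_r encloses no apparent horizon, i.e. θ₊ > 0 and θ₋ > 0 on (0, r], then the Misner–Sharp energy of S_r is nonnegative: E_r ≥ 0. -/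
open Real Set

/-- **Theorem 3 (positivity).** For spherically symmetric initial data satisfying the
dominant energy condition, if the sphere `S_r` encloses no apparent horizon
(`θ₊ > 0` and `θ₋ > 0` on `(0, r]`), then the Misner–Sharp energy is nonnegative. -/
theorem MisnerSharp_nonneg
    (g11 ρ ka kb : ℝ → ℝ) (rbar r : ℝ)
    (hg11 : ContDiff ℝ (⊤ : ℕ∞) g11) (hρ : ContDiff ℝ (⊤ : ℕ∞) ρ)
    (hka : ContDiff ℝ (⊤ : ℕ∞) ka) (hkb : ContDiff ℝ (⊤ : ℕ∞) kb)
    (hg11pos : ∀ t ∈ Icc (0:ℝ) rbar, 0 < g11 t)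
    (hρ0 : ρ 0 = 0) (hρ'0 : deriv ρ 0 = 1) (hg110 : g11 0 = 1)
    (hρpos : ∀ t ∈ Ioc (0:ℝ) rbar, 0 < ρ t)
    (hDEC : ∀ t ∈ Icc (0:ℝ) rbar,
      |momentumDensity g11 ρ ka kb t| ≤ energyDensity g11 ρ ka kb t)
    (hr : 0 < r) (hrle : r ≤ rbar)
    (hnohorizon : ∀ t ∈ Ioc (0:ℝ) r, 0 < θp g11 ρ kb t ∧ 0 < θm g11 ρ kb t) :
    0 ≤ MSenergy g11 ρ kb r := by
  -- smooth substitute for the Misner–Sharp energy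
  set F : ℝ → ℝ := fun t => ρ t / 2 * (1 - (deriv ρ t)^2 / g11 t + (ρ t)^2 * (kb t)^2)
    with hFdef
  set G : ℝ → ℝ := fun t => 4 * π * (ρ t)^2 * Real.sqrt (g11 t) *
      (energyDensity g11 ρ ka kb t * D g11 ρ t - ρ t * kb t * momentumDensity g11 ρ ka kb t)
    with hGdef
  have hρd : Differentiable ℝ ρ := hρ.differentiable (by simp)
  have hρ' : ContDiff ℝ ((⊤:ℕ∞) : WithTop ℕ∞) (deriv ρ) := (contDiff_infty_iff_deriv.mp (hρ.of_le (by simp))).2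
  have hρ'd : Differentiable ℝ (deriv ρ) := hρ'.differentiable (by simp)
  have hgd : Differentiable ℝ g11 := hg11.differentiable (by simp)
  have hkbd : Differentiable ℝ kb := hkb.differentiable (by simp)
  -- the key derivative computation
  have key : ∀ t ∈ Icc (0:ℝ) rbar, ρ t ≠ 0 → HasDerivAt F (G t) t := by
    intro t ht hρt
    have hgt : 0 < g11 t := hg11pos t ht
    have hst : 0 < Real.sqrt (g11 t) := Real.sqrt_pos.mpr hgt
    have hs2 : Real.sqrt (g11 t) ^ 2 = g11 t := Real.sq_sqrt hgt.le
    have h1 : HasDerivAt ρ (deriv ρ t) t := (hρd t).hasDerivAt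
    have h2 : HasDerivAt (deriv ρ) (deriv (deriv ρ) t) t := (hρ'd t).hasDerivAt
    have hg : HasDerivAt g11 (deriv g11 t) t := (hgd t).hasDerivAt
    have hb : HasDerivAt kb (deriv kb t) t := (hkbd t).hasDerivAt
    have hsq : HasDerivAt (fun u => Real.sqrt (g11 u)) (deriv g11 t / (2 * Real.sqrt (g11 t))) t := by
      have := (Real.hasDerivAt_sqrt hgt.ne').comp t hg
      refine this.congr_deriv ?_
      ring
    have hQ : HasDerivAt (fun u => deriv ρ u / Real.sqrt (g11 u))
        ((deriv (deriv ρ) t * Real.sqrt (g11 t) -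
          deriv ρ t * (deriv g11 t / (2 * Real.sqrt (g11 t)))) / Real.sqrt (g11 t) ^ 2) t :=
      h2.div hsq hst.ne'
    have hDρ : D g11 ρ = fun u => deriv ρ u / Real.sqrt (g11 u) := rfl
    have hDDρ : D g11 (D g11 ρ) t =
        ((deriv (deriv ρ) t * Real.sqrt (g11 t) -
          deriv ρ t * (deriv g11 t / (2 * Real.sqrt (g11 t)))) / Real.sqrt (g11 t) ^ 2) /
          Real.sqrt (g11 t) := by
      unfold D
      rw [hQ.deriv]
    -- derivative of F via combinators
    have hA : HasDerivAt (fun u => (deriv ρ u)^2) (2 * deriv ρ t * deriv (deriv ρ) t) t := by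
      have := h2.pow 2
      refine this.congr_deriv ?_; simp only [Pi.pow_apply, Nat.cast_ofNat]; ring
    have hB : HasDerivAt (fun u => (deriv ρ u)^2 / g11 u)
        ((2 * deriv ρ t * deriv (deriv ρ) t * g11 t - (deriv ρ t)^2 * deriv g11 t) / (g11 t)^2) t :=
      hA.div hg hgt.ne'
    have hC : HasDerivAt (fun u => (ρ u)^2 * (kb u)^2)
        (2 * ρ t * deriv ρ t * (kb t)^2 + (ρ t)^2 * (2 * kb t * deriv kb t)) t := by
      have := (h1.pow 2).mul (hb.pow 2)
      refine this.congr_deriv ?_; simp only [Pi.pow_apply, Nat.cast_ofNat]; ring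
    have hD2 : HasDerivAt (fun u => 1 - (deriv ρ u)^2 / g11 u + (ρ u)^2 * (kb u)^2)
        (-((2 * deriv ρ t * deriv (deriv ρ) t * g11 t - (deriv ρ t)^2 * deriv g11 t) / (g11 t)^2)
          + (2 * ρ t * deriv ρ t * (kb t)^2 + (ρ t)^2 * (2 * kb t * deriv kb t))) t := by
      have := ((hasDerivAt_const t (1:ℝ)).sub hB).add hC
      refine this.congr_deriv ?_; ring
    have hE : HasDerivAt (fun u => ρ u / 2) (deriv ρ t / 2) t := h1.div_const 2
    have hFd : HasDerivAt F
        (deriv ρ t / 2 * (1 - (deriv ρ t)^2 / g11 t + (ρ t)^2 * (kb t)^2)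
          + ρ t / 2 * (-((2 * deriv ρ t * deriv (deriv ρ) t * g11 t - (deriv ρ t)^2 * deriv g11 t) / (g11 t)^2)
          + (2 * ρ t * deriv ρ t * (kb t)^2 + (ρ t)^2 * (2 * kb t * deriv kb t)))) t := hE.mul hD2
    have hGeq : G t = deriv ρ t / 2 * (1 - (deriv ρ t)^2 / g11 t + (ρ t)^2 * (kb t)^2)
          + ρ t / 2 * (-((2 * deriv ρ t * deriv (deriv ρ) t * g11 t - (deriv ρ t)^2 * deriv g11 t) / (g11 t)^2)
          + (2 * ρ t * deriv ρ t * (kb t)^2 + (ρ t)^2 * (2 * kb t * deriv kb t))) := by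
      rw [hGdef]
      simp only [energyDensity, momentumDensity, scalarCurv, hDDρ]
      unfold D
      rw [← hs2]
      set s := Real.sqrt (g11 t) with hs
      field_simp
      rw [Real.sqrt_sq hst.le]
      ring
    rw [hGeq]
    exact hFd
  -- nonnegativity of G on (0,r]
  have hGnonneg : ∀ t ∈ Ioc (0:ℝ) r, 0 ≤ G t := by
    intro t ht
    have ht' : t ∈ Icc (0:ℝ) rbar := ⟨ht.1.le, ht.2.trans hrle⟩
    have hρt : 0 < ρ t := hρpos t ⟨ht.1, ht.2.trans hrle⟩
    have hst : 0 < Real.sqrt (g11 t) := Real.sqrt_pos.mpr (hg11pos t ht')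
    obtain ⟨hθp, hθm⟩ := hnohorizon t ht
    have hw : ρ t * |kb t| < D g11 ρ t := by
      rw [θp] at hθp
      rw [θm] at hθm
      rw [mul_div_assoc] at hθp hθm
      rcases abs_cases (kb t) with ⟨h, _⟩ | ⟨h, _⟩ <;> rw [h]
      · have h1 : kb t < D g11 ρ t / ρ t := by linarith
        have := (lt_div_iff₀ hρt).mp h1
        linarith
      · have h1 : -kb t < D g11 ρ t / ρ t := by linarith
        have := (lt_div_iff₀ hρt).mp h1
        linarith
    have hDEC' := hDEC t ht'
    have hJ : 0 ≤ |momentumDensity g11 ρ ka kb t| := abs_nonneg _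
    have hw0 : 0 ≤ D g11 ρ t := le_of_lt (lt_of_le_of_lt (by positivity) hw)
    have hprod : ρ t * kb t * momentumDensity g11 ρ ka kb t ≤
        (ρ t * |kb t|) * |momentumDensity g11 ρ ka kb t| := by
      calc ρ t * kb t * momentumDensity g11 ρ ka kb t
          ≤ |ρ t * kb t * momentumDensity g11 ρ ka kb t| := le_abs_self _
        _ = (ρ t * |kb t|) * |momentumDensity g11 ρ ka kb t| := by
            rw [abs_mul, abs_mul, abs_of_pos hρt]
    have hcore : 0 ≤ energyDensity g11 ρ ka kb t * D g11 ρ t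
        - ρ t * kb t * momentumDensity g11 ρ ka kb t := by
      nlinarith [mul_le_mul_of_nonneg_right hDEC' hw0,
        mul_le_mul_of_nonneg_left hw.le hJ]
    rw [hGdef]
    have : (0:ℝ) ≤ 4 * π * (ρ t)^2 * Real.sqrt (g11 t) := by positivity
    positivity
  -- monotonicity of F on [0, r]
  have hcont : ContinuousOn F (Icc 0 r) := by
    apply ContinuousOn.mul
    · exact (hρ.continuous.continuousOn).div_const 2
    · apply ContinuousOn.add
      · apply ContinuousOn.sub continuousOn_const
        exact ((hρ'.continuous.pow 2).continuousOn).div hg11.continuous.continuousOn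
          (fun t ht => (hg11pos t ⟨ht.1, ht.2.trans hrle⟩).ne')
      · exact ((hρ.continuous.pow 2).mul (hkb.continuous.pow 2)).continuousOn
  have hmono : MonotoneOn F (Icc 0 r) := by
    apply monotoneOn_of_deriv_nonneg (convex_Icc 0 r) hcont
    · intro x hx
      rw [interior_Icc] at hx
      exact ((key x ⟨hx.1.le, hx.2.le.trans hrle⟩
        (hρpos x ⟨hx.1, hx.2.le.trans hrle⟩).ne').differentiableAt).differentiableWithinAt
    · intro x hx
      rw [interior_Icc] at hx
      rw [(key x ⟨hx.1.le, hx.2.le.trans hrle⟩ (hρpos x ⟨hx.1, hx.2.le.trans hrle⟩).ne').deriv]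
      exact hGnonneg x ⟨hx.1, hx.2.le⟩
  have hF0 : F 0 = 0 := by simp [hFdef, hρ0]
  have hFr : 0 ≤ F r := by
    rw [← hF0]
    exact hmono ⟨le_refl 0, hr.le⟩ ⟨hr.le, le_refl r⟩ hr.le
  -- finally, MSenergy = F at r
  have hρr : 0 < ρ r := hρpos r ⟨hr, hrle⟩
  have hgr : 0 < g11 r := hg11pos r ⟨hr.le, hrle⟩
  have hs2 : Real.sqrt (g11 r) ^ 2 = g11 r := Real.sq_sqrt hgr.le
  have : MSenergy g11 ρ kb r = F r := by
    rw [hFdef]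
    simp only [MSenergy, θp, θm]
    unfold D
    rw [← hs2]
    set s := Real.sqrt (g11 r) with hs
    have hsne : s ≠ 0 := by
      rw [hs]; exact (Real.sqrt_pos.mpr hgr).ne'
    field_simp
    rw [Real.sqrt_sq (Real.sqrt_nonneg _)]
    ring
  rw [this]
  exact hFr
end

section
/- Let (g₁₁, ρ, k_a, k_b) be a spherically symmetric initial data set on B_{r̄} satisfying the dominant energy condition μ ≥ |J(n)|, and let 0 < r₀ < r ≤ r̄. Suppose S_{r₀} is the outermost apparent horizon enclosed by S_r, and it is a horizon of only one type: θ₊(r₀) θ₋(r₀) = 0 with θ₊(r₀) + θ₋(r₀) > 0, while θ₊ > 0 and θ₋ > 0 on (r₀, r]. Then the Misner–Sharp energy of S_r satisfies the lower bound E_r ≥ √(A(S_{r₀})/(16π)) = ρ(r₀)/2. -/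
open Real Set

noncomputable def Dd (g11 ρ : ℝ → ℝ) (t : ℝ) : ℝ :=
  (deriv (deriv ρ) t * Real.sqrt (g11 t)
      - deriv ρ t * (deriv g11 t / (2 * Real.sqrt (g11 t)))) / Real.sqrt (g11 t) ^ 2

/-- derivative of `F = (ρ/2)(1 - (Dρ)² + ρ²k_b²)` with respect to `r`. -/
noncomputable def Fd (g11 ρ kb : ℝ → ℝ) (t : ℝ) : ℝ :=
  deriv ρ t / 2 * (1 - (deriv ρ t / Real.sqrt (g11 t)) ^ 2 + (ρ t) ^ 2 * (kb t) ^ 2)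
    + ρ t / 2 * (-(2 * (deriv ρ t / Real.sqrt (g11 t)) * Dd g11 ρ t)
        + (2 * ρ t * deriv ρ t * (kb t) ^ 2 + (ρ t) ^ 2 * (2 * kb t * deriv kb t)))

lemma hasDerivAt_q (g11 ρ : ℝ → ℝ) (hg11 : ContDiff ℝ (⊤ : ℕ∞) g11) (hρ : ContDiff ℝ (⊤ : ℕ∞) ρ)
    (t : ℝ) (hG : 0 < g11 t) :
    HasDerivAt (fun x => deriv ρ x / Real.sqrt (g11 x)) (Dd g11 ρ t) t := by
  have hst : Real.sqrt (g11 t) ≠ 0 := (Real.sqrt_pos.mpr hG).ne'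
  have hg : HasDerivAt g11 (deriv g11 t) t := (hg11.differentiable (by simp) t).hasDerivAt
  have hρ2 : HasDerivAt (deriv ρ) (deriv (deriv ρ) t) t :=
    (((contDiff_infty_iff_deriv.mp (hρ.of_le (by simp))).2.differentiable (by norm_num)) t).hasDerivAt
  have hsq : HasDerivAt (fun x => Real.sqrt (g11 x)) (deriv g11 t / (2 * Real.sqrt (g11 t))) t := by
    have h := (Real.hasDerivAt_sqrt hG.ne').comp t hg
    refine h.congr_deriv ?_
    ring
  exact hρ2.div hsq hst

lemma hasDerivAt_F (g11 ρ kb : ℝ → ℝ) (hg11 : ContDiff ℝ (⊤ : ℕ∞) g11) (hρ : ContDiff ℝ (⊤ : ℕ∞) ρ)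
    (hkb : ContDiff ℝ (⊤ : ℕ∞) kb) (t : ℝ) (hG : 0 < g11 t) :
    HasDerivAt (fun x => ρ x / 2 * (1 - (deriv ρ x / Real.sqrt (g11 x)) ^ 2
        + (ρ x) ^ 2 * (kb x) ^ 2)) (Fd g11 ρ kb t) t := by
  have hρ1 : HasDerivAt ρ (deriv ρ t) t := (hρ.differentiable (by simp) t).hasDerivAt
  have hkb1 : HasDerivAt kb (deriv kb t) t := (hkb.differentiable (by simp) t).hasDerivAt
  have hq := hasDerivAt_q g11 ρ hg11 hρ t hG
  have h1 := (hρ1.div_const 2).mul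
    (((hasDerivAt_const t (1:ℝ)).sub (hq.pow 2)).add ((hρ1.pow 2).mul (hkb1.pow 2)))
  refine h1.congr_deriv ?_
  simp [Fd]


/-- **Theorem 3 (horizon lower bound).** For spherically symmetric initial data satisfying
the dominant energy condition, if `S_{r₀}` is the outermost apparent horizon enclosed by
`S_r`, of only one type (`θ₊(r₀)θ₋(r₀) = 0`, `θ₊(r₀) + θ₋(r₀) > 0`), and `θ₊ > 0`,
`θ₋ > 0` on `(r₀, r]`, then `E_r ≥ √(A(S_{r₀})/16π) = ρ(r₀)/2`. -/
theorem MisnerSharp_horizon_lower_bound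
    (g11 ρ ka kb : ℝ → ℝ) (rbar r₀ r : ℝ)
    (hg11 : ContDiff ℝ (⊤ : ℕ∞) g11) (hρ : ContDiff ℝ (⊤ : ℕ∞) ρ)
    (hka : ContDiff ℝ (⊤ : ℕ∞) ka) (hkb : ContDiff ℝ (⊤ : ℕ∞) kb)
    (hg11pos : ∀ t ∈ Icc (0:ℝ) rbar, 0 < g11 t)
    (hρ0 : ρ 0 = 0) (hρ'0 : deriv ρ 0 = 1) (hg110 : g11 0 = 1)
    (hρpos : ∀ t ∈ Ioc (0:ℝ) rbar, 0 < ρ t)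
    (hDEC : ∀ t ∈ Icc (0:ℝ) rbar,
      |momentumDensity g11 ρ ka kb t| ≤ energyDensity g11 ρ ka kb t)
    (hr₀ : 0 < r₀) (hr₀r : r₀ < r) (hrle : r ≤ rbar)
    (hhorizon : θp g11 ρ kb r₀ * θm g11 ρ kb r₀ = 0)
    (honetype : 0 < θp g11 ρ kb r₀ + θm g11 ρ kb r₀)
    (houtermost : ∀ t ∈ Ioc r₀ r, 0 < θp g11 ρ kb t ∧ 0 < θm g11 ρ kb t) :
    ρ r₀ / 2 ≤ MSenergy g11 ρ kb r := by
  have hsub : Icc r₀ r ⊆ Icc 0 rbar := Icc_subset_Icc hr₀.le hrle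
  have hGpos : ∀ t ∈ Icc r₀ r, 0 < g11 t := fun t ht => hg11pos t (hsub ht)
  have hppos : ∀ t ∈ Icc r₀ r, 0 < ρ t := fun t ht =>
    hρpos t ⟨lt_of_lt_of_le hr₀ ht.1, ht.2.trans hrle⟩
  -- The Misner-Sharp energy agrees with F on the interval
  have hms : ∀ t ∈ Icc r₀ r, MSenergy g11 ρ kb t
      = ρ t / 2 * (1 - (deriv ρ t / Real.sqrt (g11 t)) ^ 2 + (ρ t) ^ 2 * (kb t) ^ 2) := by
    intro t ht
    have hp := (hppos t ht).ne'
    simp only [MSenergy, θp, θm, D]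
    have key : (ρ t) ^ 2 / 4 * ((2 * (deriv ρ t / Real.sqrt (g11 t)) / ρ t + 2 * kb t) *
        (2 * (deriv ρ t / Real.sqrt (g11 t)) / ρ t - 2 * kb t))
        = (deriv ρ t / Real.sqrt (g11 t)) ^ 2 - (ρ t) ^ 2 * (kb t) ^ 2 := by
      have h2 : ρ t ^ 2 * (ρ t)⁻¹ ^ 2 = 1 := by
        rw [← mul_pow, mul_inv_cancel₀ hp, one_pow]
      field_simp [hp]
      ring
    rw [key]
    ring
  -- Monotonicity of F on [r₀, r]
  have hmono : MonotoneOn (fun x => ρ x / 2 * (1 - (deriv ρ x / Real.sqrt (g11 x)) ^ 2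
      + (ρ x) ^ 2 * (kb x) ^ 2)) (Icc r₀ r) := by
    apply monotoneOn_of_deriv_nonneg (convex_Icc r₀ r)
    · intro t ht
      exact (hasDerivAt_F g11 ρ kb hg11 hρ hkb t (hGpos t ht)).continuousAt.continuousWithinAt
    · intro t ht
      rw [interior_Icc] at ht
      exact (hasDerivAt_F g11 ρ kb hg11 hρ hkb t
        (hGpos t ⟨ht.1.le, ht.2.le⟩)).differentiableAt.differentiableWithinAt
    · intro t ht
      rw [interior_Icc] at ht
      have htIcc : t ∈ Icc r₀ r := ⟨ht.1.le, ht.2.le⟩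
      have hG := hGpos t htIcc
      have hp := hppos t htIcc
      have hst : Real.sqrt (g11 t) ≠ 0 := (Real.sqrt_pos.mpr hG).ne'
      rw [(hasDerivAt_F g11 ρ kb hg11 hρ hkb t hG).deriv]
      have hqd : deriv (fun x => deriv ρ x / Real.sqrt (g11 x)) t = Dd g11 ρ t :=
        (hasDerivAt_q g11 ρ hg11 hρ t hG).deriv
      obtain ⟨hJ1, hJ2⟩ := abs_le.mp (hDEC t (hsub htIcc))
      have hθ := houtermost t ⟨ht.1, ht.2.le⟩
      have hident : Fd g11 ρ kb t = π * Real.sqrt (g11 t) * ρ t ^ 3 *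
          (θp g11 ρ kb t * (energyDensity g11 ρ ka kb t - momentumDensity g11 ρ ka kb t)
           + θm g11 ρ kb t * (energyDensity g11 ρ ka kb t + momentumDensity g11 ρ ka kb t)) := by
        have hDeq : D g11 ρ = fun x => deriv ρ x / Real.sqrt (g11 x) := rfl
        simp only [Fd, energyDensity, momentumDensity, scalarCurv, θp, θm, D, Dd]
        rw [hDeq, hqd]
        simp only [Dd]
        field_simp
        ring
      rw [hident]
      refine mul_nonneg (mul_nonneg (mul_nonneg Real.pi_pos.le (Real.sqrt_nonneg _))
        (pow_nonneg hp.le 3)) (add_nonneg (mul_nonneg hθ.1.le (by linarith))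
        (mul_nonneg hθ.2.le (by linarith)))
  have hmem₀ : r₀ ∈ Icc r₀ r := left_mem_Icc.mpr hr₀r.le
  have hmemr : r ∈ Icc r₀ r := right_mem_Icc.mpr hr₀r.le
  have h1 := hmono hmem₀ hmemr hr₀r.le
  have h0 : MSenergy g11 ρ kb r₀ = ρ r₀ / 2 := by
    simp [MSenergy, hhorizon]
  rw [← h0, hms r₀ hmem₀, hms r hmemr]
  exact h1
end
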